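/- If h : [K_∞ → K_∞] → K_∞ and k : K_∞ → [K_∞ → K_∞] are the mutually inverse equivalences obtained from the colimit property of K_∞ over the ω-diagram (K_n, (f_n⁺, f_n⁻)) (i.e. h is the unique map with h ∘ F(f_{n,∞}) ≃ f_{n+1,∞} and k the unique map with k ∘ f_{n+1,∞} ≃ F(f_{n,∞})), then h(f) ≃ ⋁_n f_{n+1,∞}(f_{∞,n} ∘ f ∘ f_{n,∞}) for all continuous f : K_∞ → K_∞, and k(x)(y) ≃ ⋁_n f_{n,∞}(x_{n+1}(y_n)) for all x, y ∈ K_∞. -/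
import Mathlib


universe u v w

/-- Vertices `x, y` of an h.p.o. (the largest sub-Kan complex of a 0-∞-category, modelled
by the preorder of its vertices under the weak order `≾`) are equivalent (`x ≃ y`) if
`x ≾ y` and `y ≾ x`. -/
def HEquiv {K : Type u} [Preorder K] (x y : K) : Prop := x ≤ y ∧ y ≤ x

/-- A sub-h.p.o. `X ⊆ K` is directed if it is nonempty and any two of its vertices admit an
upper bound in `X`. -/
def HDirected {K : Type u} [Preorder K] (X : Set K) : Prop :=
  X.Nonempty ∧ ∀ x ∈ X, ∀ y ∈ X, ∃ z ∈ X, x ≤ z ∧ y ≤ z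

/-- An h.p.o. `K` is a complete homotopy partial order (c.h.p.o.) if it has a minimum element
and every directed sub-h.p.o. has a supremum (a least upper bound, unique up to `HEquiv`). -/
def IsCHPO (K : Type u) [Preorder K] : Prop :=
  (∃ b : K, ∀ x, b ≤ x) ∧ ∀ X : Set K, HDirected X → ∃ s, IsLUB X s

/-- A functor `f : K → K'` of c.h.p.o.'s is continuous if `f(⋁X) ≃ ⋁ f(X)` for every
directed `X ⊆ K`, i.e. `f` sends any supremum of a directed set to a supremum of its image. -/
def HContinuous {K : Type u} {K' : Type v} [Preorder K] [Preorder K'] (f : K → K') : Prop :=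
  ∀ X : Set K, HDirected X → ∀ s : K, IsLUB X s → IsLUB (f '' X) (f s)

/-- `[K → K']`: the h.p.o. of continuous functors from `K` to `K'`. -/
def ContHom (K : Type u) (K' : Type v) [Preorder K] [Preorder K'] : Type (max u v) :=
  {f : K → K' // HContinuous f}

/-- The pointwise order on `[K → K']`: `f ≾ g` iff `f x ≾ g x` for all `x ∈ K`. -/
instance ContHom.instPreorder {K : Type u} {K' : Type v} [Preorder K] [Preorder K'] :
    Preorder (ContHom K K') :=
  Preorder.lift (fun f => (f.1 : K → K'))

/-- Continuous functors are monotone with respect to the weak order. -/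
theorem HContinuous.mono {K : Type u} {K' : Type v} [Preorder K] [Preorder K']
    {f : K → K'} (hf : HContinuous f) : Monotone f := by
  intro a b hab
  have hd : HDirected ({a, b} : Set K) := by
    refine ⟨⟨a, Or.inl rfl⟩, ?_⟩
    intro x hx y hy
    refine ⟨b, Or.inr rfl, ?_, ?_⟩ <;>
      first
        | (rcases hx with rfl | rfl; exacts [hab, le_rfl])
        | (rcases hy with rfl | rfl; exacts [hab, le_rfl])
  have hl : IsLUB ({a, b} : Set K) b := by
    constructor
    · rintro x (rfl | rfl); exacts [hab, le_rfl]
    · intro u hu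
      exact hu (Or.inr rfl)
  exact (hf {a, b} hd b hl).1 ⟨a, Or.inl rfl, rfl⟩

/-- The image of a directed sub-h.p.o. under a monotone map is directed. -/
theorem HDirected.image {K : Type u} {K' : Type v} [Preorder K] [Preorder K']
    {X : Set K} (hX : HDirected X) {f : K → K'} (hf : Monotone f) :
    HDirected (f '' X) := by
  obtain ⟨⟨x0, hx0⟩, hdir⟩ := hX
  refine ⟨⟨f x0, ⟨x0, hx0, rfl⟩⟩, ?_⟩
  rintro _ ⟨x, hx, rfl⟩ _ ⟨y, hy, rfl⟩
  obtain ⟨z, hz, hxz, hyz⟩ := hdir x hx y hy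
  exact ⟨f z, ⟨z, hz, rfl⟩, hf hxz, hf hyz⟩

/-- The composite of continuous functors is continuous. -/
theorem HContinuous.comp {K : Type u} {K' : Type v} {K'' : Type w}
    [Preorder K] [Preorder K'] [Preorder K''] {g : K' → K''} {f : K → K'}
    (hg : HContinuous g) (hf : HContinuous f) : HContinuous (g ∘ f) := by
  intro X hX s hs
  rw [Set.image_comp]
  exact hg (f '' X) (hX.image hf.mono) (f s) (hf X hX s hs)

/-- The tower `K₀, K₁ = [K₀ → K₀], K₂ = [K₁ → K₁], …` of c.h.p.o.'s, defined by
`K_{n+1} = [K_n → K_n]`, together with its (pointwise) orders. -/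
def Tower (K₀ : Type u) (i₀ : Preorder K₀) : ℕ → Σ' (T : Type u), Preorder T
  | 0 => ⟨K₀, i₀⟩
  | n + 1 =>
    ⟨@ContHom (Tower K₀ i₀ n).1 (Tower K₀ i₀ n).1 (Tower K₀ i₀ n).2 (Tower K₀ i₀ n).2,
      @ContHom.instPreorder _ _ (Tower K₀ i₀ n).2 (Tower K₀ i₀ n).2⟩

instance TowerPreorder (K₀ : Type u) (i₀ : Preorder K₀) (n : ℕ) :
    Preorder (Tower K₀ i₀ n).1 :=
  (Tower K₀ i₀ n).2

/-- The projective (inverse) limit of a projective system of c.h.p.o.'s: sequences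
`(x_i)_i` with `f_i (x_{i+1}) ≃ x_i`, ordered componentwise. -/
def ProjLim (K : ℕ → Type u) [∀ i, Preorder (K i)] (f : ∀ i, K (i + 1) → K i) : Type u :=
  {x : ∀ i, K i // ∀ i, HEquiv (f i (x (i + 1))) (x i)}

/-- The componentwise order on the projective limit. -/
instance ProjLim.instPreorder (K : ℕ → Type u) [∀ i, Preorder (K i)]
    (f : ∀ i, K (i + 1) → K i) : Preorder (ProjLim K f) :=
  Preorder.lift (fun x => (x.1 : ∀ i, K i))

/-- `K_∞ = lim←(K_n, f_n⁻)`, the projective limit of the tower along the h-projections. -/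
def TowLim (K₀ : Type u) (i₀ : Preorder K₀)
    (fm : ∀ n, (Tower K₀ i₀ (n + 1)).1 → (Tower K₀ i₀ n).1) : Type u :=
  ProjLim (fun n => (Tower K₀ i₀ n).1) fm

instance TowLim.instPreorder (K₀ : Type u) (i₀ : Preorder K₀)
    (fm : ∀ n, (Tower K₀ i₀ (n + 1)).1 → (Tower K₀ i₀ n).1) :
    Preorder (TowLim K₀ i₀ fm) :=
  inferInstanceAs (Preorder (ProjLim (fun n => (Tower K₀ i₀ n).1) fm))

private theorem hdir_of_monotone {A : Type*} [Preorder A] {c : ℕ → A} (hc : Monotone c) :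
    HDirected (Set.range c) := by
  refine ⟨⟨c 0, ⟨0, rfl⟩⟩, ?_⟩
  rintro _ ⟨a, rfl⟩ _ ⟨b, rfl⟩
  exact ⟨c (max a b), ⟨max a b, rfl⟩, hc (le_max_left a b), hc (le_max_right a b)⟩

private theorem isLUB_range_congr' {A : Type*} [Preorder A] {a b : ℕ → A}
    (hab : ∀ n, HEquiv (a n) (b n)) {s : A} (h : IsLUB (Set.range a) s) :
    IsLUB (Set.range b) s := by
  constructor
  · rintro _ ⟨n, rfl⟩
    exact (hab n).2.trans (h.1 ⟨n, rfl⟩)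
  · intro u hu
    refine h.2 ?_
    rintro _ ⟨n, rfl⟩
    exact (hab n).1.trans (hu ⟨n, rfl⟩)

private theorem isLUB_range_tail' {A : Type*} [Preorder A] {a : ℕ → A} (hmono : Monotone a)
    {s : A} (h : IsLUB (Set.range a) s) : IsLUB (Set.range fun n => a (n + 1)) s := by
  constructor
  · rintro _ ⟨n, rfl⟩
    exact h.1 ⟨n + 1, rfl⟩
  · intro u hu
    refine h.2 ?_
    rintro _ ⟨n, rfl⟩
    exact (hmono (Nat.le_succ n)).trans (hu ⟨n, rfl⟩)

private theorem isLUB_congr_point' {A : Type*} [Preorder A] {S : Set A} {s t : A}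
    (h : IsLUB S s) (he : HEquiv s t) : IsLUB S t :=
  ⟨fun _ ha => (h.1 ha).trans he.1, fun _ hu => he.2.trans (h.2 hu)⟩


set_option maxHeartbeats 1000000 in
/-- If `h : [K_∞ → K_∞] → K_∞` and `k : K_∞ → [K_∞ → K_∞]` are the mutually inverse
equivalences obtained from the colimit property of `K_∞` over the ω-diagram
`(K_n, (f_n⁺, f_n⁻))` — i.e. `h` is the unique (up to equivalence) map with
`h ∘ F(f_{n,∞}) ≃ f_{n+1,∞}` and `k` the unique map with `k ∘ f_{n+1,∞} ≃ F(f_{n,∞})`,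
where `F(f_{n,∞})(g) = f_{n,∞} ∘ g ∘ f_{∞,n}` — then
`h(f) ≃ ⋁_n f_{n+1,∞}(f_{∞,n} ∘ f ∘ f_{n,∞})` for all continuous `f : K_∞ → K_∞`, and
`k(x)(y) ≃ ⋁_n f_{n,∞}(x_{n+1}(y_n))` for all `x, y ∈ K_∞`.

Here `K₀` is the initial c.h.p.o. with minimum `⊥₀ = b₀`; `K_{n+1} = [K_n → K_n]`;
`(f_n⁺, f_n⁻) = Fⁿ(f₀⁺, f₀⁻)` is the h-projection pair from `K_n` to `K_{n+1}`
(with `f₀⁺ x = λy. x'` for some edge `x → x'`, `f₀⁻ g = g ⊥₀`, and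
`F(f⁺, f⁻) = (λh. f⁺∘h∘f⁻, λh. f⁻∘h∘f⁺)`); `K_∞ = lim←(K_n, f_n⁻)`; and
`f_{n,∞} = e n : K_n → K_∞`, `f_{∞,n} = (·)_n : K_∞ → K_n` are the colimit h-embeddings
and h-projections. -/
theorem h_k_sup_formulas (K₀ : Type u) (i₀ : Preorder K₀) (b₀ : K₀) (hb₀ : ∀ x, b₀ ≤ x)
    (hCHPO : ∀ n, IsCHPO (Tower K₀ i₀ n).1)
    (fp : ∀ n, (Tower K₀ i₀ n).1 → (Tower K₀ i₀ (n + 1)).1)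
    (fm : ∀ n, (Tower K₀ i₀ (n + 1)).1 → (Tower K₀ i₀ n).1)
    (hfp_cont : ∀ n, HContinuous (fp n)) (hfm_cont : ∀ n, HContinuous (fm n))
    (hfp0 : ∀ x : K₀, ∃ x' : K₀, x ≤ x' ∧ ∀ y : K₀, Subtype.val (fp 0 x) y = x')
    (hfm0 : ∀ g : (Tower K₀ i₀ 1).1, fm 0 g = Subtype.val g b₀)
    (hfp_succ : ∀ n (g : (Tower K₀ i₀ (n + 1)).1) (y : (Tower K₀ i₀ (n + 1)).1),
      Subtype.val (fp (n + 1) g) y = fp n (Subtype.val g (fm n y)))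
    (hfm_succ : ∀ n (G : (Tower K₀ i₀ (n + 2)).1) (a : (Tower K₀ i₀ n).1),
      Subtype.val (fm (n + 1) G) a = fm n (Subtype.val G (fp n a)))
    (hpair : ∀ n, (∀ x, HEquiv (fm n (fp n x)) x) ∧ ∀ y, fp n (fm n y) ≤ y)
    (e : ∀ n, (Tower K₀ i₀ n).1 → TowLim K₀ i₀ fm)
    (he_cont : ∀ n, HContinuous (e n))
    (hp_cont : ∀ n, HContinuous (fun y : TowLim K₀ i₀ fm => y.1 n))
    (he_pair : ∀ n, (∀ x, HEquiv ((e n x).1 n) x) ∧ ∀ y : TowLim K₀ i₀ fm, e n (y.1 n) ≤ y)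
    (he_compat : ∀ n x, HEquiv (e n x) (e (n + 1) (fp n x)))
    (h : ContHom (ContHom (TowLim K₀ i₀ fm) (TowLim K₀ i₀ fm)) (TowLim K₀ i₀ fm))
    (k : ContHom (TowLim K₀ i₀ fm) (ContHom (TowLim K₀ i₀ fm) (TowLim K₀ i₀ fm)))
    -- `h ∘ F(f_{n,∞}) ≃ f_{n+1,∞}`, and `h` is the unique such map up to equivalence
    (hh : ∀ n (g : (Tower K₀ i₀ (n + 1)).1)
        (G : ContHom (TowLim K₀ i₀ fm) (TowLim K₀ i₀ fm)),
      (∀ y : TowLim K₀ i₀ fm, Subtype.val G y = e n (Subtype.val g (y.1 n))) →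
        HEquiv (Subtype.val h G) (e (n + 1) g))
    (hh_unique : ∀ h' : ContHom (ContHom (TowLim K₀ i₀ fm) (TowLim K₀ i₀ fm))
        (TowLim K₀ i₀ fm),
      (∀ n (g : (Tower K₀ i₀ (n + 1)).1)
          (G : ContHom (TowLim K₀ i₀ fm) (TowLim K₀ i₀ fm)),
        (∀ y : TowLim K₀ i₀ fm, Subtype.val G y = e n (Subtype.val g (y.1 n))) →
          HEquiv (Subtype.val h' G) (e (n + 1) g)) →
      ∀ G, HEquiv (Subtype.val h' G) (Subtype.val h G))
    -- `k ∘ f_{n+1,∞} ≃ F(f_{n,∞})`, and `k` is the unique such map up to equivalence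
    (hk : ∀ n (g : (Tower K₀ i₀ (n + 1)).1) (y : TowLim K₀ i₀ fm),
      HEquiv (Subtype.val (Subtype.val k (e (n + 1) g)) y) (e n (Subtype.val g (y.1 n))))
    (hk_unique : ∀ k' : ContHom (TowLim K₀ i₀ fm)
        (ContHom (TowLim K₀ i₀ fm) (TowLim K₀ i₀ fm)),
      (∀ n (g : (Tower K₀ i₀ (n + 1)).1) (y : TowLim K₀ i₀ fm),
        HEquiv (Subtype.val (Subtype.val k' (e (n + 1) g)) y)
          (e n (Subtype.val g (y.1 n)))) →
      ∀ x y, HEquiv (Subtype.val (Subtype.val k' x) y) (Subtype.val (Subtype.val k x) y))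
    -- `h` and `k` are mutually inverse equivalences
    (hinv₁ : ∀ x : TowLim K₀ i₀ fm, HEquiv (Subtype.val h (Subtype.val k x)) x)
    (hinv₂ : ∀ (f : ContHom (TowLim K₀ i₀ fm) (TowLim K₀ i₀ fm)) (y : TowLim K₀ i₀ fm),
      HEquiv (Subtype.val (Subtype.val k (Subtype.val h f)) y) (Subtype.val f y)) :
    -- `h(f) ≃ ⋁_n f_{n+1,∞}(f_{∞,n} ∘ f ∘ f_{n,∞})`
    (∀ f : ContHom (TowLim K₀ i₀ fm) (TowLim K₀ i₀ fm),
      IsLUB (Set.range fun n =>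
          e (n + 1)
            ⟨fun a => (Subtype.val f (e n a)).1 n,
              (hp_cont n).comp ((Subtype.property f).comp (he_cont n))⟩)
        (Subtype.val h f)) ∧
    -- `k(x)(y) ≃ ⋁_n f_{n,∞}(x_{n+1}(y_n))`
    (∀ x y : TowLim K₀ i₀ fm,
      IsLUB (Set.range fun n => e n (Subtype.val (x.1 (n + 1)) (y.1 n)))
        (Subtype.val (Subtype.val k x) y)) := by
  classical
  -- the chain `n ↦ e n (z.1 n)` is monotone
  have chain : ∀ (z : TowLim K₀ i₀ fm) (n : ℕ), e n (z.1 n) ≤ e (n + 1) (z.1 (n + 1)) := by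
    intro z n
    have h1 : e n (z.1 n) ≤ e n (fm n (z.1 (n + 1))) := (he_cont n).mono (z.2 n).2
    have h2 := he_compat n (fm n (z.1 (n + 1)))
    have h3 : e (n + 1) (fp n (fm n (z.1 (n + 1)))) ≤ e (n + 1) (z.1 (n + 1)) :=
      (he_cont (n + 1)).mono ((hpair n).2 _)
    exact h1.trans (h2.1.trans h3)
  have emono : ∀ z : TowLim K₀ i₀ fm, Monotone fun n => e n (z.1 n) := fun z =>
    monotone_nat_of_le_succ (chain z)
  -- every `z` is the sup of its approximations
  have L2 : ∀ z : TowLim K₀ i₀ fm, IsLUB (Set.range fun n => e n (z.1 n)) z := by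
    intro z
    constructor
    · rintro _ ⟨n, rfl⟩
      exact (he_pair n).2 z
    · intro u hu
      intro m
      have h1 : (e m (z.1 m)).1 m ≤ u.1 m := hu ⟨m, rfl⟩ m
      exact ((he_pair m).1 (z.1 m)).2.trans h1
  -- stability of the approximations of `e n a`
  have L3' : ∀ (z : TowLim K₀ i₀ fm) (n : ℕ), HEquiv (e n (z.1 n)) z →
      ∀ m, n ≤ m → HEquiv (e m (z.1 m)) z := by
    intro z n hz m hm
    induction m, hm using Nat.le_induction with
    | base => exact hz
    | succ m hm ih =>
      exact ⟨(he_pair (m + 1)).2 z, ih.2.trans (chain z m)⟩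
  have L3 : ∀ (n : ℕ) (a : (Tower K₀ i₀ n).1) (m : ℕ), n ≤ m →
      HEquiv (e m ((e n a).1 m)) (e n a) := by
    intro n a m hm
    refine L3' (e n a) n ⟨(he_cont n).mono ((he_pair n).1 a).1,
      (he_cont n).mono ((he_pair n).1 a).2⟩ m hm
  -- K_∞ has suprema of directed subsets
  have M1 : ∀ D : Set (TowLim K₀ i₀ fm), HDirected D → ∃ s, IsLUB D s := by
    intro D hD
    have hDi : ∀ i, HDirected ((fun z : TowLim K₀ i₀ fm => z.1 i) '' D) := fun i =>
      hD.image (hp_cont i).mono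
    have hsi : ∀ i, ∃ s, IsLUB ((fun z : TowLim K₀ i₀ fm => z.1 i) '' D) s := fun i =>
      (hCHPO i).2 _ (hDi i)
    choose s hs using hsi
    refine ⟨⟨s, ?_⟩, ?_, ?_⟩
    · intro i
      have h1 : IsLUB (fm i '' ((fun z : TowLim K₀ i₀ fm => z.1 (i + 1)) '' D))
          (fm i (s (i + 1))) := hfm_cont i _ (hDi (i + 1)) _ (hs (i + 1))
      have key : ∀ u, u ∈ upperBounds (fm i '' ((fun z : TowLim K₀ i₀ fm => z.1 (i + 1)) '' D)) ↔
          u ∈ upperBounds ((fun z : TowLim K₀ i₀ fm => z.1 i) '' D) := by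
        intro u
        constructor
        · rintro hu _ ⟨z, hz, rfl⟩
          exact (z.2 i).2.trans (hu ⟨_, ⟨z, hz, rfl⟩, rfl⟩)
        · rintro hu _ ⟨_, ⟨z, hz, rfl⟩, rfl⟩
          exact (z.2 i).1.trans (hu ⟨z, hz, rfl⟩)
      have h2 : IsLUB ((fun z : TowLim K₀ i₀ fm => z.1 i) '' D) (fm i (s (i + 1))) := by
        constructor
        · exact (key _).1 h1.1
        · intro u hu
          exact h1.2 ((key u).2 hu)
      exact ⟨h2.2 (hs i).1, (hs i).2 h2.1⟩
    · rintro z hz i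
      exact (hs i).1 ⟨z, hz, rfl⟩
    · intro u hu i
      refine (hs i).2 ?_
      rintro _ ⟨z, hz, rfl⟩
      exact hu hz i
  -- the pointwise sup of a monotone family of continuous maps is continuous
  have M2 : ∀ C : ℕ → ContHom (TowLim K₀ i₀ fm) (TowLim K₀ i₀ fm), Monotone C →
      ∃ G : ContHom (TowLim K₀ i₀ fm) (TowLim K₀ i₀ fm),
        (∀ n, C n ≤ G) ∧ ∀ y, IsLUB (Set.range fun n => (C n).1 y) (G.1 y) := by
    intro C hC
    have hdir : ∀ y, HDirected (Set.range fun n => (C n).1 y) := by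
      intro y
      refine ⟨⟨_, ⟨0, rfl⟩⟩, ?_⟩
      rintro _ ⟨a, rfl⟩ _ ⟨b, rfl⟩
      exact ⟨_, ⟨max a b, rfl⟩, hC (le_max_left a b) y, hC (le_max_right a b) y⟩
    choose σ hσ using fun y => M1 _ (hdir y)
    have hσmono : Monotone σ := by
      intro a b hab
      refine (hσ a).2 ?_
      rintro _ ⟨n, rfl⟩
      exact ((C n).2.mono hab).trans ((hσ b).1 ⟨n, rfl⟩)
    have hσcont : HContinuous σ := by
      intro Y hY t ht
      constructor
      · rintro _ ⟨y, hy, rfl⟩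
        exact hσmono (ht.1 hy)
      · intro v hv
        refine (hσ t).2 ?_
        rintro _ ⟨n, rfl⟩
        have h1 : IsLUB ((C n).1 '' Y) ((C n).1 t) := (C n).2 Y hY t ht
        refine h1.2 ?_
        rintro _ ⟨y, hy, rfl⟩
        exact ((hσ y).1 ⟨n, rfl⟩).trans (hv ⟨y, hy, rfl⟩)
    refine ⟨⟨σ, hσcont⟩, ?_, fun y => hσ y⟩
    intro n y
    exact (hσ y).1 ⟨n, rfl⟩
  constructor
  · -- the formula for h
    intro f
    have Econt : ∀ n, HContinuous
        (fun y : TowLim K₀ i₀ fm => e n ((Subtype.val f (e n (y.1 n))).1 n)) := fun n =>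
      (he_cont n).comp ((hp_cont n).comp ((Subtype.property f).comp
        ((he_cont n).comp (hp_cont n))))
    set E : ℕ → ContHom (TowLim K₀ i₀ fm) (TowLim K₀ i₀ fm) := fun n =>
      ⟨fun y => e n ((Subtype.val f (e n (y.1 n))).1 n), Econt n⟩ with hE
    have Emono : Monotone E := by
      refine monotone_nat_of_le_succ ?_
      intro n y
      have h1 : Subtype.val f (e n (y.1 n)) ≤ Subtype.val f (e (n + 1) (y.1 (n + 1))) :=
        f.2.mono (chain y n)
      have h2 : e n ((Subtype.val f (e n (y.1 n))).1 n) ≤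
          e n ((Subtype.val f (e (n + 1) (y.1 (n + 1)))).1 n) := (he_cont n).mono (h1 n)
      exact h2.trans (chain (Subtype.val f (e (n + 1) (y.1 (n + 1)))) n)
    have hLUBE : IsLUB (Set.range E) f := by
      constructor
      · rintro _ ⟨n, rfl⟩
        intro y
        have h1 : e n ((Subtype.val f (e n (y.1 n))).1 n) ≤ Subtype.val f (e n (y.1 n)) :=
          (he_pair n).2 _
        exact h1.trans (f.2.mono ((he_pair n).2 y))
      · intro u hu y
        have stepA : ∀ n, Subtype.val f (e n (y.1 n)) ≤ u.1 y := by
          intro n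
          refine (L2 (Subtype.val f (e n (y.1 n)))).2 ?_
          rintro _ ⟨m, rfl⟩
          have hmax : e m ((Subtype.val f (e n (y.1 n))).1 m) ≤
              e (max m n) ((Subtype.val f (e n (y.1 n))).1 (max m n)) :=
            emono _ (le_max_left m n)
          refine hmax.trans ?_
          have h3 : HEquiv (e (max m n) ((e n (y.1 n)).1 (max m n))) (e n (y.1 n)) :=
            L3 n (y.1 n) (max m n) (le_max_right m n)
          have h4 : Subtype.val f (e n (y.1 n)) ≤
              Subtype.val f (e (max m n) ((e n (y.1 n)).1 (max m n))) := f.2.mono h3.2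
          have h5 : e (max m n) ((Subtype.val f (e n (y.1 n))).1 (max m n)) ≤
              e (max m n) ((Subtype.val f (e (max m n) ((e n (y.1 n)).1 (max m n)))).1 (max m n)) :=
            (he_cont (max m n)).mono (h4 (max m n))
          have h6 : (E (max m n)).1 (e n (y.1 n)) ≤ u.1 (e n (y.1 n)) :=
            hu ⟨max m n, rfl⟩ (e n (y.1 n))
          have h7 : u.1 (e n (y.1 n)) ≤ u.1 y := u.2.mono ((he_pair n).2 y)
          exact h5.trans (h6.trans h7)
        have hB : IsLUB (Subtype.val f '' Set.range fun n => e n (y.1 n))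
            (Subtype.val f y) := f.2 _ (hdir_of_monotone (emono y)) y (L2 y)
        refine hB.2 ?_
        rintro _ ⟨_, ⟨n, rfl⟩, rfl⟩
        exact stepA n
    have h1 : IsLUB (Subtype.val h '' Set.range E) (Subtype.val h f) :=
      h.2 _ (hdir_of_monotone Emono) f hLUBE
    have h2 : IsLUB (Set.range fun n => Subtype.val h (E n)) (Subtype.val h f) := by
      constructor
      · rintro _ ⟨n, rfl⟩
        exact h1.1 ⟨E n, ⟨n, rfl⟩, rfl⟩
      · intro u hu
        refine h1.2 ?_
        rintro _ ⟨_, ⟨n, rfl⟩, rfl⟩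
        exact hu ⟨n, rfl⟩
    exact isLUB_range_congr' (fun n => hh n _ (E n) fun _ => rfl) h2
  · -- the formula for k
    intro x y
    have Cmono : Monotone fun n => Subtype.val k (e n (x.1 n)) := fun a b hab =>
      k.2.mono (emono x hab)
    obtain ⟨G, hG1, hG2⟩ := M2 _ Cmono
    have hkx : IsLUB (Subtype.val k '' Set.range fun n => e n (x.1 n)) (Subtype.val k x) :=
      k.2 _ (hdir_of_monotone (emono x)) x (L2 x)
    have hxG : Subtype.val k x ≤ G := by
      refine hkx.2 ?_
      rintro _ ⟨_, ⟨n, rfl⟩, rfl⟩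
      exact hG1 n
    have hGy : G.1 y ≤ (Subtype.val k x).1 y := by
      refine (hG2 y).2 ?_
      rintro _ ⟨n, rfl⟩
      exact k.2.mono ((he_pair n).2 x) y
    have hlub : IsLUB (Set.range fun n => (Subtype.val k (e n (x.1 n))).1 y)
        ((Subtype.val k x).1 y) := isLUB_congr_point' (hG2 y) ⟨hGy, hxG y⟩
    have amono : Monotone fun n => (Subtype.val k (e n (x.1 n))).1 y := fun a b hab =>
      Cmono hab y
    exact isLUB_range_congr' (fun n => hk n (x.1 (n + 1)) y) (isLUB_range_tail' amono hlub)
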